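/- If p and q are polynomials over ℤ with positive degrees deg p and deg q such that n = deg(pq) = deg p + deg q, then e^{-n} · H(p) · H(q) ≤ H(pq) ≤ n · H(p) · H(q). -/

import Mathlib

open Polynomial

/-- Sum of squared moduli of coefficients. -/
noncomputable def L2C (f : Polynomial ℂ) : ℝ := ∑ k ∈ f.support, Complex.normSq (f.coeff k)

lemma L2C_eq_range (f : Polynomial ℂ) {N : ℕ} (h : f.natDegree < N) :
    L2C f = ∑ k ∈ Finset.range N, Complex.normSq (f.coeff k) := by
  refine Finset.sum_subset (Polynomial.supp_subset_range h) ?_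
  intro x _ hx
  simp [Polynomial.notMem_support_iff.mp hx]

lemma normSq_swap (a u v : ℂ) :
    Complex.normSq (u - a * v)
      = Complex.normSq ((starRingEnd ℂ) a * u - v)
        + (1 - Complex.normSq a) * (Complex.normSq u - Complex.normSq v) := by
  simp only [Complex.normSq_apply, Complex.sub_re, Complex.sub_im, Complex.mul_re,
    Complex.mul_im, Complex.conj_re, Complex.conj_im]
  ring

lemma L2C_swap (a : ℂ) (r : Polynomial ℂ) :
    L2C ((X - C a) * r) = L2C ((C ((starRingEnd ℂ) a) * X - 1) * r) := by
  set N := r.natDegree with hN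
  have hXr : ∀ k, (X * r).coeff (k + 1) = r.coeff k := fun k => Polynomial.coeff_X_mul r k
  have hd1 : ((X - C a) * r).natDegree < N + 2 := by
    have h1 : ((X - C a) * r).natDegree ≤ (X - C a).natDegree + r.natDegree :=
      Polynomial.natDegree_mul_le
    have h2 : (X - C a).natDegree ≤ 1 := by
      simpa using Polynomial.natDegree_X_sub_C_le (a := a)
    omega
  have hd2 : ((C ((starRingEnd ℂ) a) * X - 1) * r).natDegree < N + 2 := by
    have h1 : ((C ((starRingEnd ℂ) a) * X - 1) * r).natDegree
        ≤ (C ((starRingEnd ℂ) a) * X - 1).natDegree + r.natDegree := Polynomial.natDegree_mul_le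
    have h2 : (C ((starRingEnd ℂ) a) * X - 1).natDegree ≤ 1 := by
      have : (C ((starRingEnd ℂ) a) * X - 1 : Polynomial ℂ)
          = C ((starRingEnd ℂ) a) * X + C (-1) := by
        rw [map_neg, Polynomial.C_1]; ring
      rw [this]
      exact Polynomial.natDegree_linear_le
    omega
  rw [L2C_eq_range _ hd1, L2C_eq_range _ hd2]
  have hc1 : ∀ k, ((X - C a) * r).coeff k = (X * r).coeff k - a * r.coeff k := by
    intro k; rw [sub_mul, Polynomial.coeff_sub, Polynomial.coeff_C_mul]
  have hc2 : ∀ k, ((C ((starRingEnd ℂ) a) * X - 1) * r).coeff k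
      = (starRingEnd ℂ) a * (X * r).coeff k - r.coeff k := by
    intro k; rw [sub_mul, one_mul, Polynomial.coeff_sub, mul_assoc, Polynomial.coeff_C_mul]
  have hshift : ∑ k ∈ Finset.range (N + 2), Complex.normSq ((X * r).coeff k)
      = ∑ k ∈ Finset.range (N + 2), Complex.normSq (r.coeff k) := by
    show ∑ k ∈ Finset.range (N + 1 + 1), Complex.normSq ((X * r).coeff k)
      = ∑ k ∈ Finset.range (N + 1 + 1), Complex.normSq (r.coeff k)
    have e1 := Finset.sum_range_succ' (fun k => Complex.normSq ((X * r).coeff k)) (N + 1)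
    have e2 := Finset.sum_range_succ (fun k => Complex.normSq (r.coeff k)) (N + 1)
    rw [e1, e2]
    simp [hXr, Polynomial.mul_coeff_zero,
      Polynomial.coeff_eq_zero_of_natDegree_lt (show r.natDegree < N + 1 by omega)]
  calc ∑ k ∈ Finset.range (N + 2), Complex.normSq (((X - C a) * r).coeff k)
      = ∑ k ∈ Finset.range (N + 2),
          (Complex.normSq (((C ((starRingEnd ℂ) a) * X - 1) * r).coeff k)
            + (1 - Complex.normSq a)
              * (Complex.normSq ((X * r).coeff k) - Complex.normSq (r.coeff k))) := by
        refine Finset.sum_congr rfl fun k _ => ?_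
        rw [hc1, hc2, normSq_swap]
    _ = ∑ k ∈ Finset.range (N + 2), Complex.normSq (((C ((starRingEnd ℂ) a) * X - 1) * r).coeff k)
        + (1 - Complex.normSq a)
          * (∑ k ∈ Finset.range (N + 2), Complex.normSq ((X * r).coeff k)
            - ∑ k ∈ Finset.range (N + 2), Complex.normSq (r.coeff k)) := by
        rw [Finset.sum_add_distrib, ← Finset.mul_sum, Finset.sum_sub_distrib]
    _ = ∑ k ∈ Finset.range (N + 2), Complex.normSq (((C ((starRingEnd ℂ) a) * X - 1) * r).coeff k) := by
        rw [hshift]; ring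

/-- Replace a root `a` by the factor `conj a • X - 1` when `a` is outside the unit disc. -/
noncomputable def gfun (a : ℂ) : Polynomial ℂ :=
  if 1 < ‖a‖ then C ((starRingEnd ℂ) a) * X - 1 else X - C a

lemma L2C_gfun (a : ℂ) (r : Polynomial ℂ) : L2C ((X - C a) * r) = L2C (gfun a * r) := by
  unfold gfun; split_ifs with h
  · exact L2C_swap a r
  · rfl

lemma L2C_prod (s : Multiset ℂ) : ∀ r : Polynomial ℂ,
    L2C ((s.map (fun a => X - C a)).prod * r) = L2C ((s.map gfun).prod * r) := by
  induction s using Multiset.induction with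
  | empty => intro r; simp
  | cons a s ih =>
    intro r
    rw [Multiset.map_cons, Multiset.prod_cons, Multiset.map_cons, Multiset.prod_cons,
      mul_assoc, L2C_gfun a, mul_left_comm (gfun a), ih (gfun a * r),
      mul_left_comm (Multiset.map gfun s).prod, ← mul_assoc]

lemma abs_leadingCoeff_gfun (a : ℂ) :
    ‖(gfun a).leadingCoeff‖ = max 1 (‖a‖) := by
  unfold gfun; split_ifs with h
  · have ha : a ≠ 0 := by
      intro h0; rw [h0] at h; simp at h; linarith
    have hne : (starRingEnd ℂ) a ≠ 0 := by simpa using ha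
    have : (C ((starRingEnd ℂ) a) * X - 1 : Polynomial ℂ)
        = C ((starRingEnd ℂ) a) * X + C (-1) := by rw [map_neg, Polynomial.C_1]; ring
    rw [this, Polynomial.leadingCoeff_linear hne, Complex.norm_conj, max_eq_right h.le]
  · rw [Polynomial.leadingCoeff_X_sub_C, norm_one, max_eq_left (not_lt.mp h)]

/-- Mahler-measure-like quantity. -/
noncomputable def Mn (f : Polynomial ℂ) : ℝ :=
  ‖f.leadingCoeff‖ * (f.roots.map (fun a => max 1 (‖a‖))).prod

lemma one_le_prodmax (s : Multiset ℂ) :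
    (1 : ℝ) ≤ (s.map (fun a => max 1 (‖a‖))).prod := by
  refine Multiset.one_le_prod ?_
  intro x hx
  obtain ⟨a, _, rfl⟩ := Multiset.mem_map.mp hx
  exact le_max_left _ _

lemma Mn_nonneg (f : Polynomial ℂ) : 0 ≤ Mn f :=
  mul_nonneg (norm_nonneg _) (le_trans zero_le_one (one_le_prodmax _))

lemma Mn_mul {f g : Polynomial ℂ} (hf : f ≠ 0) (hg : g ≠ 0) : Mn (f * g) = Mn f * Mn g := by
  unfold Mn
  rw [Polynomial.roots_mul (mul_ne_zero hf hg), Polynomial.leadingCoeff_mul, norm_mul,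
    Multiset.map_add, Multiset.prod_add]
  ring

lemma normSq_lead_le_L2C (h : Polynomial ℂ) : Complex.normSq h.leadingCoeff ≤ L2C h := by
  by_cases h0 : h = 0
  · simp [h0, L2C]
  · exact Finset.single_le_sum (fun i _ => Complex.normSq_nonneg _)
      (Polynomial.natDegree_mem_support_of_nonzero h0)

/-- Landau's inequality: the square of the Mahler measure is at most the sum of
squared moduli of coefficients. -/
lemma Mn_sq_le_L2C (f : Polynomial ℂ) (hf : Multiset.card f.roots = f.natDegree) :
    Mn f ^ 2 ≤ L2C f := by
  by_cases h0 : f = 0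
  · simp [h0, Mn, L2C]
  have hfac := Polynomial.C_leadingCoeff_mul_prod_multiset_X_sub_C hf
  set f' := (f.roots.map gfun).prod * C f.leadingCoeff with hf'
  have hL2 : L2C f = L2C f' := by
    conv_lhs => rw [← hfac, mul_comm]
    exact L2C_prod f.roots (C f.leadingCoeff)
  have hlead : ‖f'.leadingCoeff‖ = Mn f := by
    rw [hf', Polynomial.leadingCoeff_mul, Polynomial.leadingCoeff_C, norm_mul,
      Polynomial.leadingCoeff_multiset_prod, Multiset.map_map,
      (map_multiset_prod (normHom : ℂ →*₀ ℝ) _ : ‖_‖ = (Multiset.map (fun x => ‖x‖) _).prod),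
      Multiset.map_map]
    rw [Mn, mul_comm]
    congr 1
    exact congrArg Multiset.prod (Multiset.map_congr rfl fun a _ => abs_leadingCoeff_gfun a)
  calc Mn f ^ 2 = Complex.normSq f'.leadingCoeff := by rw [← hlead, Complex.sq_norm]
    _ ≤ L2C f' := normSq_lead_le_L2C f'
    _ = L2C f := hL2.symm

lemma abs_prod_le_prodmax {s t : Multiset ℂ} (h : t ≤ s) :
    ‖t.prod‖ ≤ (s.map (fun a => max 1 (‖a‖))).prod := by
  obtain ⟨u, rfl⟩ := Multiset.le_iff_exists_add.mp h
  rw [Multiset.map_add, Multiset.prod_add]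
  calc ‖t.prod‖ = (t.map (fun a => ‖a‖)).prod :=
        map_multiset_prod (normHom : ℂ →*₀ ℝ) t
    _ ≤ (t.map (fun a => max 1 (‖a‖))).prod :=
        Multiset.prod_map_le_prod_map₀ _ _ (fun i _ => norm_nonneg i)
          (fun i _ => le_max_right _ _)
    _ ≤ (t.map (fun a => max 1 (‖a‖))).prod
        * (u.map (fun a => max 1 (‖a‖))).prod :=
        le_mul_of_one_le_right (le_trans zero_le_one (one_le_prodmax t)) (one_le_prodmax u)

lemma abs_esymm_le (s : Multiset ℂ) (j : ℕ) :
    ‖s.esymm j‖ ≤ ((Multiset.card s).choose j : ℝ)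
      * (s.map (fun a => max 1 (‖a‖))).prod := by
  unfold Multiset.esymm
  calc ‖((s.powersetCard j).map Multiset.prod).sum‖
      ≤ ((((s.powersetCard j).map Multiset.prod)).map (fun z => ‖z‖)).sum := by
        simpa using
          norm_multiset_sum_le ((s.powersetCard j).map Multiset.prod)
    _ ≤ Multiset.card ((((s.powersetCard j).map Multiset.prod)).map (fun z => ‖z‖))
          • ((s.map (fun a => max 1 (‖a‖))).prod) := by
        refine Multiset.sum_le_card_nsmul _ _ ?_
        intro x hx
        rw [Multiset.map_map] at hx
        obtain ⟨t, ht, rfl⟩ := Multiset.mem_map.mp hx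
        exact abs_prod_le_prodmax (Multiset.mem_powersetCard.mp ht).1
    _ = ((Multiset.card s).choose j : ℝ) * (s.map (fun a => max 1 (‖a‖))).prod := by
        rw [Multiset.card_map, Multiset.card_map, Multiset.card_powersetCard, nsmul_eq_mul]

lemma choose_le_two_pow_pred {d k : ℕ} (hd : 1 ≤ d) : d.choose k ≤ 2 ^ (d - 1) := by
  obtain ⟨e, rfl⟩ : ∃ e, d = e + 1 := ⟨d - 1, by omega⟩
  simp only [Nat.add_sub_cancel]
  have hsum := Nat.sum_range_choose e
  have hsingle : ∀ j : ℕ, e.choose j ≤ 2 ^ e := by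
    intro j
    by_cases hj : j ≤ e
    · have h1 := Finset.single_le_sum (f := fun i => e.choose i)
        (fun i _ => Nat.zero_le _) (Finset.mem_range.mpr (by omega : j < e + 1))
      omega
    · rw [Nat.choose_eq_zero_of_lt (by omega)]; exact Nat.zero_le _
  match k with
  | 0 => simpa using Nat.one_le_two_pow
  | (j+1) =>
    have hrec : (e + 1).choose (j + 1) = e.choose j + e.choose (j + 1) := by
      simpa [Nat.succ_eq_add_one] using Nat.choose_succ_succ e j
    rw [hrec]
    by_cases hj : j + 1 ≤ e
    · have hsub : ({j, j + 1} : Finset ℕ) ⊆ Finset.range (e + 1) := by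
        intro x hx; simp at hx ⊢; omega
      have h2 := Finset.sum_le_sum_of_subset (f := fun i => e.choose i) hsub
      rw [Finset.sum_pair (by omega : j ≠ j + 1)] at h2
      omega
    · rw [Nat.choose_eq_zero_of_lt (show e < j + 1 by omega)]
      have h3 := hsingle j
      omega

lemma abs_coeff_le_Mn (f : Polynomial ℂ) (hf : Multiset.card f.roots = f.natDegree)
    (hd : 1 ≤ f.natDegree) (k : ℕ) :
    ‖f.coeff k‖ ≤ 2 ^ (f.natDegree - 1) * Mn f := by
  by_cases hk : k ≤ f.natDegree
  · rw [Polynomial.coeff_eq_esymm_roots_of_card hf hk]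
    rw [norm_mul, norm_mul, norm_pow]
    have habs1 : ‖(-1 : ℂ)‖ = 1 := by simp
    rw [habs1, one_pow, mul_one]
    calc ‖f.leadingCoeff‖ * ‖f.roots.esymm (f.natDegree - k)‖
        ≤ ‖f.leadingCoeff‖ * (((Multiset.card f.roots).choose (f.natDegree - k) : ℝ)
            * (f.roots.map (fun a => max 1 (‖a‖))).prod) := by
          exact mul_le_mul_of_nonneg_left (abs_esymm_le _ _) (norm_nonneg _)
      _ ≤ ‖f.leadingCoeff‖ * ((2 ^ (f.natDegree - 1) : ℝ)
            * (f.roots.map (fun a => max 1 (‖a‖))).prod) := by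
          refine mul_le_mul_of_nonneg_left (mul_le_mul_of_nonneg_right ?_
            (le_trans zero_le_one (one_le_prodmax _))) (norm_nonneg _)
          rw [hf]
          exact_mod_cast Nat.cast_le.mpr (choose_le_two_pow_pred hd)
      _ = 2 ^ (f.natDegree - 1) * Mn f := by rw [Mn]; ring
  · rw [Polynomial.coeff_eq_zero_of_natDegree_lt (by omega)]
    simp only [norm_zero]
    exact mul_nonneg (by positivity) (Mn_nonneg f)

/-- The height of an integer polynomial: the maximum of the absolute values
of its coefficients. -/
def polyHeight (p : Polynomial ℤ) : ℕ :=
  p.support.sup fun i => (p.coeff i).natAbs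

lemma height_coeff (p : Polynomial ℤ) (i : ℕ) : (p.coeff i).natAbs ≤ polyHeight p := by
  unfold polyHeight
  by_cases h : i ∈ p.support
  · exact Finset.le_sup (f := fun i => (p.coeff i).natAbs) h
  · simp [Polynomial.notMem_support_iff.mp h]

lemma natAbs_sum_le' {α : Type*} (s : Finset α) (f : α → ℤ) :
    (∑ i ∈ s, f i).natAbs ≤ ∑ i ∈ s, (f i).natAbs := by
  classical
  induction s using Finset.induction with
  | empty => simp
  | insert _ _ h ih =>
    rw [Finset.sum_insert h, Finset.sum_insert h]
    exact le_trans (Int.natAbs_add_le _ _) (by omega)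

lemma card_support_le (p : Polynomial ℤ) : p.support.card ≤ p.natDegree + 1 := by
  calc p.support.card ≤ (Finset.range (p.natDegree + 1)).card :=
        Finset.card_le_card Polynomial.supp_subset_range_natDegree_succ
    _ = p.natDegree + 1 := Finset.card_range _

lemma height_mul_le (p q : Polynomial ℤ) (hq1 : 1 ≤ q.natDegree) :
    polyHeight (p * q) ≤ (p.natDegree + q.natDegree) * polyHeight p * polyHeight q := by
  unfold polyHeight
  apply Finset.sup_le
  intro k _
  rw [Polynomial.coeff_mul]
  calc (∑ x ∈ Finset.HasAntidiagonal.antidiagonal k, p.coeff x.1 * q.coeff x.2).natAbs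
      ≤ ∑ x ∈ Finset.HasAntidiagonal.antidiagonal k, (p.coeff x.1 * q.coeff x.2).natAbs :=
        natAbs_sum_le' _ _
    _ = ∑ x ∈ Finset.HasAntidiagonal.antidiagonal k, (p.coeff x.1).natAbs * (q.coeff x.2).natAbs := by
        simp [Int.natAbs_mul]
    _ ≤ ∑ x ∈ Finset.HasAntidiagonal.antidiagonal k, (p.coeff x.1).natAbs * polyHeight q :=
        Finset.sum_le_sum fun x _ => Nat.mul_le_mul_left _ (height_coeff q x.2)
    _ = (∑ x ∈ Finset.HasAntidiagonal.antidiagonal k, (p.coeff x.1).natAbs) * polyHeight q := by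
        rw [← Finset.sum_mul]
    _ ≤ ((p.natDegree + 1) * polyHeight p) * polyHeight q := by
        refine Nat.mul_le_mul_right _ ?_
        have e1 : ∑ x ∈ Finset.HasAntidiagonal.antidiagonal k, (p.coeff x.1).natAbs
            = ∑ i ∈ Finset.range (k + 1), (p.coeff i).natAbs := by
          have := Finset.Nat.sum_antidiagonal_eq_sum_range_succ_mk
            (fun x => (p.coeff x.1).natAbs) k
          simpa using this
        rw [e1]
        calc ∑ i ∈ Finset.range (k + 1), (p.coeff i).natAbs
            ≤ ∑ i ∈ p.support, (p.coeff i).natAbs := by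
              refine Finset.sum_le_sum_of_ne_zero ?_
              intro x _ hx
              rw [Polynomial.mem_support_iff]
              intro h0
              rw [h0] at hx; simp at hx
          _ ≤ p.support.card • polyHeight p :=
              Finset.sum_le_card_nsmul _ _ _ fun i _ => height_coeff p i
          _ ≤ (p.natDegree + 1) * polyHeight p := by
              rw [smul_eq_mul]
              exact Nat.mul_le_mul_right _ (card_support_le p)
    _ ≤ (p.natDegree + q.natDegree) * polyHeight p * polyHeight q := by
        have : p.natDegree + 1 ≤ p.natDegree + q.natDegree := by omega
        exact Nat.mul_le_mul_right _ (Nat.mul_le_mul_right _ this)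

lemma height_le_Mn (r : Polynomial ℤ) (hr : r ≠ 0) (hdr : 1 ≤ r.natDegree) :
    (polyHeight r : ℝ) ≤ 2 ^ (r.natDegree - 1) * Mn (r.map (Int.castRingHom ℂ)) := by
  have hinj : Function.Injective (Int.castRingHom ℂ) := by
    rw [Int.coe_castRingHom]; exact Int.cast_injective
  obtain ⟨i0, hi0, hsup⟩ := Finset.exists_mem_eq_sup r.support
    (Polynomial.nonempty_support_iff.mpr hr) (fun i => (r.coeff i).natAbs)
  have hcast : (polyHeight r : ℝ) = ‖(r.map (Int.castRingHom ℂ)).coeff i0‖ := by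
    rw [polyHeight, hsup, Polynomial.coeff_map]
    simp [Complex.norm_intCast, Nat.cast_natAbs]
  rw [hcast]
  have hroots : Multiset.card (r.map (Int.castRingHom ℂ)).roots
      = (r.map (Int.castRingHom ℂ)).natDegree :=
    Polynomial.splits_iff_card_roots.mp (IsAlgClosed.splits _)
  have hdeg : (r.map (Int.castRingHom ℂ)).natDegree = r.natDegree :=
    Polynomial.natDegree_map_eq_of_injective hinj r
  have h := abs_coeff_le_Mn (r.map (Int.castRingHom ℂ)) hroots (by omega) i0
  rwa [hdeg] at h

set_option maxHeartbeats 1000000 in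
/-- If `p, q` are integer polynomials of positive degree with
`n = deg(pq) = deg p + deg q`, then
`e^{-n} H(p) H(q) ≤ H(pq) ≤ n H(p) H(q)`. -/
theorem stmt7 (p q : Polynomial ℤ) (n : ℕ)
    (hp : 0 < p.natDegree) (hq : 0 < q.natDegree)
    (h1 : n = (p * q).natDegree) (h2 : n = p.natDegree + q.natDegree) :
    Real.exp (-(n : ℝ)) * (polyHeight p : ℝ) * (polyHeight q : ℝ)
        ≤ (polyHeight (p * q) : ℝ) ∧
    (polyHeight (p * q) : ℝ) ≤ (n : ℝ) * (polyHeight p : ℝ) * (polyHeight q : ℝ) := by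
  have hp0 : p ≠ 0 := fun h => by simp [h] at hp
  have hq0 : q ≠ 0 := fun h => by simp [h] at hq
  constructor
  · -- lower bound
    have hinj : Function.Injective (Int.castRingHom ℂ) := by
      rw [Int.coe_castRingHom]; exact Int.cast_injective
    have hP := height_le_Mn p hp0 hp
    have hQ := height_le_Mn q hq0 hq
    have hMnmul : Mn ((p * q).map (Int.castRingHom ℂ))
        = Mn (p.map (Int.castRingHom ℂ)) * Mn (q.map (Int.castRingHom ℂ)) := by
      rw [Polynomial.map_mul]
      exact Mn_mul ((Polynomial.map_ne_zero_iff hinj).mpr hp0)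
        ((Polynomial.map_ne_zero_iff hinj).mpr hq0)
    have hroots : Multiset.card ((p * q).map (Int.castRingHom ℂ)).roots
        = ((p * q).map (Int.castRingHom ℂ)).natDegree :=
      Polynomial.splits_iff_card_roots.mp (IsAlgClosed.splits _)
    have hLandau := Mn_sq_le_L2C _ hroots
    have hdeg : ((p * q).map (Int.castRingHom ℂ)).natDegree = n := by
      rw [Polynomial.natDegree_map_eq_of_injective hinj, ← h1]
    set A := (polyHeight p : ℝ) with hAdef
    set B := (polyHeight q : ℝ) with hBdef
    set Cq := (polyHeight (p * q) : ℝ) with hCdef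
    set Mp := Mn (p.map (Int.castRingHom ℂ)) with hMpdef
    set Mq := Mn (q.map (Int.castRingHom ℂ)) with hMqdef
    have hA0 : 0 ≤ A := Nat.cast_nonneg _
    have hB0 : 0 ≤ B := Nat.cast_nonneg _
    have hC0 : 0 ≤ Cq := Nat.cast_nonneg _
    have hMp0 : 0 ≤ Mp := Mn_nonneg _
    have hMq0 : 0 ≤ Mq := Mn_nonneg _
    have hn2 : 2 ≤ n := by omega
    have hL2 : L2C ((p * q).map (Int.castRingHom ℂ)) ≤ ((n : ℝ) + 1) * Cq ^ 2 := by
      have hterm : ∀ k ∈ ((p * q).map (Int.castRingHom ℂ)).support,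
          Complex.normSq (((p * q).map (Int.castRingHom ℂ)).coeff k) ≤ Cq ^ 2 := by
        intro k _
        rw [Polynomial.coeff_map, ← Complex.sq_norm, eq_intCast, Complex.norm_intCast]
        have habs : |(((p * q).coeff k : ℤ) : ℝ)| = (((p * q).coeff k).natAbs : ℝ) := by
          rw [Nat.cast_natAbs, Int.cast_abs]
        rw [habs]
        exact pow_le_pow_left₀ (Nat.cast_nonneg _)
          (Nat.cast_le.mpr (height_coeff (p * q) k)) 2
      calc L2C ((p * q).map (Int.castRingHom ℂ))
          ≤ ((p * q).map (Int.castRingHom ℂ)).support.card • (Cq ^ 2) :=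
            Finset.sum_le_card_nsmul _ _ _ hterm
        _ = (((p * q).map (Int.castRingHom ℂ)).support.card : ℝ) * (Cq ^ 2) :=
            nsmul_eq_mul _ _
        _ ≤ ((n : ℝ) + 1) * Cq ^ 2 := by
            refine mul_le_mul_of_nonneg_right ?_ (by positivity)
            have hc : ((p * q).map (Int.castRingHom ℂ)).support.card ≤ n + 1 := by
              calc ((p * q).map (Int.castRingHom ℂ)).support.card
                  ≤ (Finset.range (((p * q).map (Int.castRingHom ℂ)).natDegree + 1)).card :=
                    Finset.card_le_card Polynomial.supp_subset_range_natDegree_succ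
                _ = n + 1 := by rw [Finset.card_range, hdeg]
            exact_mod_cast hc
    have e1 : A * B ≤ 2 ^ (n - 2) * (Mp * Mq) := by
      calc A * B ≤ (2 ^ (p.natDegree - 1) * Mp) * (2 ^ (q.natDegree - 1) * Mq) :=
            mul_le_mul hP hQ hB0 (by positivity)
        _ = 2 ^ ((p.natDegree - 1) + (q.natDegree - 1)) * (Mp * Mq) := by
            rw [pow_add]; ring
        _ = 2 ^ (n - 2) * (Mp * Mq) := by
            rw [show p.natDegree - 1 + (q.natDegree - 1) = n - 2 from by omega]
    have e3 : (Mp * Mq) ^ 2 ≤ ((n : ℝ) + 1) * Cq ^ 2 := by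
      rw [← hMnmul]
      exact le_trans hLandau hL2
    have hE : (2.71 : ℝ) < Real.exp 1 := lt_trans (by norm_num) Real.exp_one_gt_d9
    set E := Real.exp 1 with hEdef
    have hE0 : 0 < E := Real.exp_pos 1
    have hE2 : (7 : ℝ) ≤ E ^ 2 := by nlinarith
    have hbern : 1 + (n : ℝ) * (E ^ 2 / 4 - 1) ≤ (E ^ 2 / 4) ^ n := by
      have h := one_add_mul_le_pow (a := E ^ 2 / 4 - 1) (by nlinarith) n
      have heq : (1 + (E ^ 2 / 4 - 1)) = E ^ 2 / 4 := by ring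
      rwa [heq] at h
    have hkey : ((n : ℝ) + 1) ≤ 16 * (E ^ 2 / 4) ^ n := by
      have hn0 : (0 : ℝ) ≤ (n : ℝ) := Nat.cast_nonneg n
      have ht : (3 / 4 : ℝ) ≤ E ^ 2 / 4 - 1 := by linarith
      have h2' : (n : ℝ) * (3 / 4) ≤ (n : ℝ) * (E ^ 2 / 4 - 1) :=
        mul_le_mul_of_nonneg_left ht hn0
      linarith [hbern]
    have hpow4 : ((2 : ℝ) ^ (n - 2)) ^ 2 * 16 = 4 ^ n := by
      have ha : ((2 : ℝ) ^ (n - 2)) ^ 2 = 4 ^ (n - 2) := by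
        rw [← pow_mul, show (4 : ℝ) = 2 ^ 2 by norm_num, ← pow_mul, Nat.mul_comm]
      rw [ha, show (16 : ℝ) = 4 ^ 2 by norm_num, ← pow_add,
        show n - 2 + 2 = n from by omega]
    have hfour : (4 : ℝ) ^ n * (E ^ 2 / 4) ^ n = (E ^ 2) ^ n := by
      rw [div_pow]
      field_simp
    have e5 : ((n : ℝ) + 1) * ((2 : ℝ) ^ (n - 2)) ^ 2 ≤ (E ^ n) ^ 2 := by
      have hcomm : (E ^ n) ^ 2 = (E ^ 2) ^ n := by
        rw [← pow_mul, ← pow_mul, Nat.mul_comm]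
      rw [hcomm]
      calc ((n : ℝ) + 1) * ((2 : ℝ) ^ (n - 2)) ^ 2
          ≤ (16 * (E ^ 2 / 4) ^ n) * ((2 : ℝ) ^ (n - 2)) ^ 2 :=
            mul_le_mul_of_nonneg_right hkey (by positivity)
        _ = (E ^ 2 / 4) ^ n * (((2 : ℝ) ^ (n - 2)) ^ 2 * 16) := by ring
        _ = (E ^ 2 / 4) ^ n * 4 ^ n := by rw [hpow4]
        _ = (E ^ 2) ^ n := by rw [mul_comm, hfour]
    have hsq : (A * B) ^ 2 ≤ (E ^ n * Cq) ^ 2 := by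
      calc (A * B) ^ 2 ≤ (2 ^ (n - 2) * (Mp * Mq)) ^ 2 :=
            pow_le_pow_left₀ (mul_nonneg hA0 hB0) e1 2
        _ = ((2 : ℝ) ^ (n - 2)) ^ 2 * (Mp * Mq) ^ 2 := by ring
        _ ≤ ((2 : ℝ) ^ (n - 2)) ^ 2 * (((n : ℝ) + 1) * Cq ^ 2) :=
            mul_le_mul_of_nonneg_left e3 (by positivity)
        _ = (((n : ℝ) + 1) * ((2 : ℝ) ^ (n - 2)) ^ 2) * Cq ^ 2 := by ring
        _ ≤ (E ^ n) ^ 2 * Cq ^ 2 := mul_le_mul_of_nonneg_right e5 (by positivity)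
        _ = (E ^ n * Cq) ^ 2 := by ring
    have hfin : A * B ≤ E ^ n * Cq :=
      (pow_le_pow_iff_left₀ (mul_nonneg hA0 hB0)
        (mul_nonneg (le_of_lt (pow_pos hE0 n)) hC0) two_ne_zero).mp hsq
    have hEn : Real.exp (-(n : ℝ)) * A * B = (A * B) / E ^ n := by
      rw [Real.exp_neg]
      have hx : ((n : ℝ)) = (n : ℝ) * 1 := by ring
      rw [hx, Real.exp_nat_mul]
      ring
    rw [hEn, div_le_iff₀ (pow_pos hE0 n)]
    linarith [hfin]
  · -- upper bound
    have h := height_mul_le p q hq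
    rw [← h2] at h
    exact_mod_cast h
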